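/- arXiv:1604.00735 — 3 statements merged into one kernel-verified Lean document; each statement's English description precedes it below -/
import Mathlib

section
/- Let f : ℝ → ℝ be odd and three times continuously differentiable, let a > 0 satisfy f(a) = 0, f'(0) > 0, f'(a) < 0, and f'''(x) < 0 for all x ∈ (0, a). Let M₁, M₂ > 0 satisfy -f'(0)/f'(a) < M₁/M₂ < -f'(a)/f'(0), let x₂ = x₁ + a, and set v(x) = M₁ f(x - x₁) + M₂ f(x - x₂). Then v has exactly one zero x̂ in the open interval (x₁, x₂), and v'(x̂) > 0. -/
/-!
On `[x₁, x₂]` the field `v` vanishes at both ends, where the mass-ratio condition makes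
`v' < 0`; hence `v < 0` just right of `x₁` and `v > 0` just left of `x₂`, and the
intermediate value theorem gives a zero. Since `f'''` is even and negative on `(0, a)`, `v'''`
is negative on `(x₁, x₂)`, so `v'` is strictly concave there. By Rolle, any interior zero `z`
of `v` lies strictly between two zeros of `v'`, so `v'(z) > 0` by concavity; two interior zeros
would put a third zero of `v'` between two such points, which concavity forbids.
-/

open Set

namespace Function

variable {𝕜 F : Type*} [NontriviallyNormedField 𝕜] [NormedAddCommGroup F] [NormedSpace 𝕜 F]
  {f : 𝕜 → F}

theorem Odd.deriv (hf : f.Odd) : (_root_.deriv f).Even := fun x => by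
  have h := congrArg (fun g => _root_.deriv g x) (funext hf)
  simpa [deriv_comp_neg, deriv.neg] using h

theorem Even.deriv (hf : f.Even) : (_root_.deriv f).Odd := fun x => by
  have h := congrArg (fun g => _root_.deriv g x) (funext hf)
  simpa [deriv_comp_neg, neg_eq_iff_eq_neg] using h

end Function

def twoDeltaField (f : ℝ → ℝ) (M₁ M₂ x₁ x₂ : ℝ) (x : ℝ) : ℝ :=
  M₁ * f (x - x₁) + M₂ * f (x - x₂)

section twoDeltaField

variable {f : ℝ → ℝ} {M₁ M₂ x₁ x₂ : ℝ}

theorem differentiable_twoDeltaField (hf : Differentiable ℝ f) :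
    Differentiable ℝ (twoDeltaField f M₁ M₂ x₁ x₂) := by
  unfold twoDeltaField
  fun_prop

theorem deriv_twoDeltaField (hf : Differentiable ℝ f) :
    deriv (twoDeltaField f M₁ M₂ x₁ x₂) = twoDeltaField (deriv f) M₁ M₂ x₁ x₂ :=
  funext fun x =>
    ((((hf _).hasDerivAt.comp_sub_const x x₁).const_mul M₁).add
      (((hf _).hasDerivAt.comp_sub_const x x₂).const_mul M₂)).deriv

theorem strictConcaveOn_twoDeltaField {a : ℝ} (hf : Differentiable ℝ f)
    (hf' : Differentiable ℝ (deriv f)) (heven : (deriv (deriv f)).Even)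
    (hneg : ∀ x ∈ Ioo 0 a, deriv (deriv f) x < 0) (hM₁ : 0 < M₁) (hM₂ : 0 < M₂) :
    StrictConcaveOn ℝ (Icc x₁ (x₁ + a)) (twoDeltaField f M₁ M₂ x₁ (x₁ + a)) := by
  refine strictConcaveOn_of_deriv2_neg (convex_Icc _ _)
    (differentiable_twoDeltaField hf).continuous.continuousOn fun x hx => ?_
  rw [interior_Icc] at hx
  rw [Function.iterate_succ_apply, Function.iterate_one, deriv_twoDeltaField hf,
    deriv_twoDeltaField hf']
  have h₁ := hneg (x - x₁) ⟨by linarith [hx.1], by linarith [hx.2]⟩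
  have h₂ := hneg (x₁ + a - x) ⟨by linarith [hx.2], by linarith [hx.1]⟩
  rw [← heven, neg_sub] at h₂
  exact add_neg (mul_neg_of_pos_of_neg hM₁ h₁) (mul_neg_of_pos_of_neg hM₂ h₂)

end twoDeltaField

section ConcaveDeriv

variable {g : ℝ → ℝ} {g' A B : ℝ}

theorem exists_mem_Ioo_lt_of_hasDerivWithinAt_Ioi (hAB : A < B)
    (hg : HasDerivWithinAt g g' (Ioi A) A) (hg' : g' < 0) : ∃ z ∈ Ioo A B, g z < g A := by
  obtain ⟨z, hslope, hz⟩ :=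
    ((hg.limsup_slope_le' (lt_irrefl A) hg').and (Ioo_mem_nhdsGT hAB)).exists
  rw [slope_def_field, div_lt_iff₀ (sub_pos.2 hz.1)] at hslope
  exact ⟨z, hz, by linarith⟩

theorem exists_mem_Ioo_gt_of_hasDerivWithinAt_Iio (hAB : A < B)
    (hg : HasDerivWithinAt g g' (Iio B) B) (hg' : g' < 0) : ∃ z ∈ Ioo A B, g B < g z := by
  obtain ⟨z, hslope, hz⟩ :=
    ((hg.limsup_slope_le' (lt_irrefl B) hg').and (Ioo_mem_nhdsLT hAB)).exists
  rw [slope_def_field, div_lt_iff_of_neg (sub_neg.2 hz.2)] at hslope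
  exact ⟨z, hz, by linarith⟩

theorem deriv_pos_of_strictConcaveOn_deriv (hconc : StrictConcaveOn ℝ (Icc A B) (deriv g))
    (hg : Continuous g) {y z m : ℝ} (hAy : A < y) (hzB : z < B)
    (hy : g A = g y) (hz : g z = g B) (hm : m ∈ Icc y z) :
    0 < deriv g m := by
  obtain ⟨l, hl, hl'⟩ := exists_deriv_eq_zero hAy hg.continuousOn hy
  obtain ⟨r, hr, hr'⟩ := exists_deriv_eq_zero hzB hg.continuousOn hz
  have hlr : l < r := by linarith [hl.2, hr.1, hm.1, hm.2]
  have hm_seg : m ∈ openSegment ℝ l r := by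
    rw [openSegment_eq_Ioo hlr]
    exact ⟨by linarith [hl.2, hm.1], by linarith [hr.1, hm.2]⟩
  simpa [hl', hr'] using hconc.lt_on_openSegment ⟨hl.1.le, hlr.le.trans hr.2.le⟩
    ⟨hl.1.le.trans hlr.le, hr.2.le⟩ hlr.ne hm_seg

theorem exists_zero_deriv_pos_of_strictConcaveOn_deriv
    (hconc : StrictConcaveOn ℝ (Icc A B) (deriv g)) (hAB : A < B) (hg : Differentiable ℝ g)
    (hA : g A = 0) (hB : g B = 0) (hA' : deriv g A < 0) (hB' : deriv g B < 0) :
    ∃ z ∈ Ioo A B, g z = 0 ∧ 0 < deriv g z ∧ ∀ y ∈ Ioo A B, g y = 0 → y = z := by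
  obtain ⟨q, hq, hgq⟩ :=
    exists_mem_Ioo_lt_of_hasDerivWithinAt_Ioi hAB (hg A).hasDerivAt.hasDerivWithinAt hA'
  obtain ⟨p, hp, hgp⟩ :=
    exists_mem_Ioo_gt_of_hasDerivWithinAt_Iio hAB (hg B).hasDerivAt.hasDerivWithinAt hB'
  obtain ⟨z, hz, hgz⟩ : ∃ z ∈ uIcc q p, g z = 0 :=
    intermediate_value_uIcc hg.continuous.continuousOn
      (Icc_subset_uIcc ⟨by linarith, by linarith⟩)
  have hzAB : z ∈ Ioo A B := ordConnected_Ioo.uIcc_subset hq hp hz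
  have hpos : ∀ y ∈ Ioo A B, g y = 0 → 0 < deriv g y := fun y hy hgy =>
    deriv_pos_of_strictConcaveOn_deriv hconc hg.continuous hy.1 hy.2
      (hA.trans hgy.symm) (hgy.trans hB.symm) ⟨le_rfl, le_rfl⟩
  have hnot_lt : ∀ y ∈ Ioo A B, ∀ z ∈ Ioo A B, g y = 0 → g z = 0 → ¬ y < z :=
    fun y hy z hz hgy hgz hyz => by
      obtain ⟨m, hm, hm'⟩ := exists_deriv_eq_zero hyz hg.continuous.continuousOn
        (hgy.trans hgz.symm)
      exact (deriv_pos_of_strictConcaveOn_deriv hconc hg.continuous hy.1 hz.2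
        (hA.trans hgy.symm) (hgz.trans hB.symm) (Ioo_subset_Icc_self hm)).ne' hm'
  refine ⟨z, hzAB, hgz, hpos z hzAB hgz, fun y hy hgy => ?_⟩
  exact le_antisymm (not_lt.1 (hnot_lt z hzAB y hy hgz hgy))
    (not_lt.1 (hnot_lt y hy z hzAB hgy hgz))

end ConcaveDeriv

/-- Under the admissibility conditions on the odd kernel `f` (positive root `a`, `f'(0) > 0`,
`f'(a) < 0`, `f''' < 0` on `(0, a)`) and the mass-ratio condition, the two-spike velocity
field `v(x) = M₁ f(x - x₁) + M₂ f(x - x₂)` has a unique zero `xhat` in `(x₁, x₂)`, and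
`v'(xhat) > 0` there. -/
theorem unique_interior_stagnation_point
    (f : ℝ → ℝ) (hodd : ∀ x, f (-x) = -f x) (hf : ContDiff ℝ 3 f)
    (a : ℝ) (ha : 0 < a) (hfa : f a = 0)
    (hfp0 : 0 < deriv f 0) (hfpa : deriv f a < 0)
    (hfppp : ∀ x ∈ Set.Ioo 0 a, deriv (deriv (deriv f)) x < 0)
    (M₁ M₂ : ℝ) (hM₁ : 0 < M₁) (hM₂ : 0 < M₂)
    (hratio₁ : -(deriv f 0) / deriv f a < M₁ / M₂)
    (hratio₂ : M₁ / M₂ < -(deriv f a) / deriv f 0)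
    (x₁ x₂ : ℝ) (hx₂ : x₂ = x₁ + a)
    (v : ℝ → ℝ) (hv : ∀ x, v x = M₁ * f (x - x₁) + M₂ * f (x - x₂)) :
    ∃ xhat ∈ Set.Ioo x₁ x₂, v xhat = 0 ∧ 0 < deriv v xhat ∧
      ∀ y ∈ Set.Ioo x₁ x₂, v y = 0 → y = xhat := by
  subst hx₂
  obtain rfl : v = twoDeltaField f M₁ M₂ x₁ (x₁ + a) := funext hv
  have hf₁ : Differentiable ℝ f := hf.differentiable (by norm_num)
  have hf₂ : Differentiable ℝ (deriv f) := (hf.deriv' (n := 2)).differentiable (by norm_num)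
  have hf₃ : Differentiable ℝ (deriv (deriv f)) :=
    ((hf.deriv' (n := 2)).deriv' (n := 1)).differentiable one_ne_zero
  have hodd' : f.Odd := hodd
  have hfpna : deriv f (-a) = deriv f a := hodd'.deriv a
  rw [div_lt_div_iff₀ hM₂ hfp0] at hratio₂
  rw [neg_div, ← div_neg, div_lt_div_iff₀ (neg_pos.2 hfpa) hM₂] at hratio₁
  apply exists_zero_deriv_pos_of_strictConcaveOn_deriv _ (by linarith)
    (differentiable_twoDeltaField hf₁)
  · simp [twoDeltaField, hodd'.map_zero, hodd a, hfa]
  · simp [twoDeltaField, hodd'.map_zero, hfa]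
  · simp only [deriv_twoDeltaField hf₁, twoDeltaField, sub_self, sub_add_cancel_left, hfpna]
    linarith
  · simp only [deriv_twoDeltaField hf₁, twoDeltaField, sub_self, add_sub_cancel_left]
    linarith
  · rw [deriv_twoDeltaField hf₁]
    exact strictConcaveOn_twoDeltaField hf₂ hf₃ hodd'.deriv.deriv.deriv hfppp hM₁ hM₂
end

section
/- Let x̂ < b be real numbers and let v : [x̂, b] → ℝ be continuous with v(x̂) = 0, differentiable at x̂ with v'(x̂) > 0. Set V(x) = ∫_{x̂}^{x} v(s) ds and assume V(z) > 0 for all z ∈ (x̂, b]. Then lim_{ε → 0⁺} (1/ε) ∫_{x̂}^{b} exp(-V(z)/ε²) dz = √(π / (2 v'(x̂))). -/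
/-!
Since `v (x̂ + u) = v'(x̂) u + o(u)`, integrating gives `V (x̂ + s) = v'(x̂) s² / 2 + o(s²)`.
After the substitution `z = x̂ + ε t` the integrand becomes `exp (-V (x̂ + ε t) / ε²)`, which
tends pointwise to `exp (-v'(x̂) t² / 2)`. Near `x̂` the quadratic asymptotics, and away from `x̂`
the positive minimum of `V` on a compact interval, give a Gaussian majorant `exp (-κ t²)`
uniform in `ε`, so by dominated convergence the limit is the half-line Gaussian integral
`∫_0^∞ exp (-v'(x̂) t² / 2) dt = √(π / (2 v'(x̂)))`.
-/

open Real Filter intervalIntegral Set Asymptotics MeasureTheory Topology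

theorem isLittleO_integral_sub_half_mul_sq {v : ℝ → ℝ} {a b vp : ℝ} (hab : a < b)
    (hv : IntervalIntegrable v volume a b) (hva : v a = 0) (hvp : HasDerivAt v vp a) :
    (fun s => (∫ u in a..a + s, v u) - vp * s ^ 2 / 2) =o[𝓝[>] 0] fun s => s ^ 2 := by
  refine IsLittleO.of_bound fun η hη => ?_
  have hlin : ∀ᶠ u in 𝓝 a, |v u - vp * (u - a)| ≤ η * |u - a| := by
    simpa [hva, mul_comm vp] using (hasDerivAt_iff_isLittleO.mp hvp).bound hη
  obtain ⟨δ, hδ, hball⟩ := Metric.eventually_nhds_iff.mp hlin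
  have hsmall : ∀ᶠ s in 𝓝[>] (0 : ℝ), s < min δ (b - a) :=
    nhdsWithin_le_nhds (gt_mem_nhds (lt_min hδ (sub_pos.mpr hab)))
  filter_upwards [hsmall, self_mem_nhdsWithin] with s hs (hs0 : 0 < s)
  have has : a ≤ a + s := by linarith
  have hv_s : IntervalIntegrable v volume a (a + s) :=
    hv.mono_set (by
      rw [uIcc_of_le has, uIcc_of_le hab.le]; gcongr; linarith [min_le_right δ (b - a)])
  have hlinear : IntervalIntegrable (fun u => vp * (u - a)) volume a (a + s) := by
    apply Continuous.intervalIntegrable; fun_prop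
  have hramp : ∀ k : ℝ, ∫ u in a..a + s, k * (u - a) = k * s ^ 2 / 2 := fun k => by
    rw [integral_comp_sub_right fun u => k * u, intervalIntegral.integral_const_mul]; simp; ring
  calc ‖(∫ u in a..a + s, v u) - vp * s ^ 2 / 2‖
      = ‖∫ u in a..a + s, (v u - vp * (u - a))‖ := by
        rw [integral_sub hv_s hlinear, hramp]
    _ ≤ ∫ u in a..a + s, η * (u - a) := by
        refine norm_integral_le_of_norm_le has (ae_of_all _ fun u hu => ?_) ?_
        · have hu_near : dist u a < δ := by
            rw [dist_eq_norm, Real.norm_eq_abs, abs_of_pos (by linarith [hu.1])]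
            linarith [hu.2, min_le_left δ (b - a)]
          simpa [abs_of_pos (sub_pos.mpr hu.1)] using hball hu_near
        · apply Continuous.intervalIntegrable; fun_prop
    _ = η * s ^ 2 / 2 := hramp η
    _ ≤ η * ‖s ^ 2‖ := by rw [norm_pow, Real.norm_eq_abs, sq_abs]; nlinarith [sq_nonneg s]

theorem mul_mem_Ioc_of_mem_Ioc_div {ε t L : ℝ} (hε : 0 < ε) (ht : t ∈ Ioc 0 (L / ε)) :
    ε * t ∈ Ioc 0 L :=
  ⟨mul_pos hε ht.1, by rw [mul_comm]; exact (le_div_iff₀ hε).mp ht.2⟩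

theorem integral_Ioi_exp_neg_half_mul_sq (c : ℝ) :
    ∫ t in Ioi 0, exp (-(c / 2) * t ^ 2) = √(π / (2 * c)) := by
  rw [integral_gaussian_Ioi, show π / (c / 2) = 2 ^ 2 * (π / (2 * c)) by ring,
    sqrt_mul (by positivity), sqrt_sq zero_le_two]
  ring

section Laplace

variable {V : ℝ → ℝ} {a b c : ℝ}

theorem tendsto_div_sq_of_isLittleO
    (hV : (fun s => V (a + s) - c * s ^ 2 / 2) =o[𝓝[>] 0] fun s => s ^ 2) {t : ℝ} (ht : 0 < t) :
    Tendsto (fun ε => V (a + ε * t) / ε ^ 2) (𝓝[>] 0) (𝓝 (c * t ^ 2 / 2)) := by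
  have hscale : Tendsto (fun ε : ℝ => ε * t) (𝓝[>] 0) (𝓝[>] 0) := by
    refine tendsto_nhdsWithin_of_tendsto_nhds_of_eventually_within _ ?_ ?_
    · exact (continuous_mul_const t).tendsto' 0 0 (zero_mul t) |>.mono_left nhdsWithin_le_nhds
    · filter_upwards [self_mem_nhdsWithin] with ε (hε : 0 < ε) using mul_pos hε ht
  have hratio := (hV.comp_tendsto hscale).tendsto_div_nhds_zero
  have hlim := (hratio.const_mul (t ^ 2)).add_const (c * t ^ 2 / 2)
  rw [mul_zero, zero_add] at hlim
  refine hlim.congr' ?_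
  filter_upwards [self_mem_nhdsWithin] with ε (hε : 0 < ε)
  simp only [Function.comp]
  field_simp
  ring

theorem exists_pos_forall_mul_sq_le (hab : a < b) (hc : 0 < c)
    (hVcont : ContinuousOn V (Icc a b)) (hVpos : ∀ z ∈ Ioc a b, 0 < V z)
    (hV : (fun s => V (a + s) - c * s ^ 2 / 2) =o[𝓝[>] 0] fun s => s ^ 2) :
    ∃ κ > 0, ∀ s ∈ Ioc 0 (b - a), κ * s ^ 2 ≤ V (a + s) := by
  obtain ⟨δ, hδ, hnear⟩ : ∃ δ > 0, ∀ s ∈ Ioc 0 δ, c / 4 * s ^ 2 ≤ V (a + s) := by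
    have hbound := hV.bound (by positivity : 0 < c / 4)
    obtain ⟨u, hu, hsub⟩ := mem_nhdsGT_iff_exists_Ioo_subset.mp hbound
    refine ⟨u / 2, half_pos hu, fun s hs => ?_⟩
    have := hsub ⟨hs.1, by linarith [hs.2, mem_Ioi.mp hu]⟩
    simp only [mem_ofPred_eq, norm_pow, Real.norm_eq_abs, sq_abs, abs_le] at this
    linarith [this.1]
  obtain ⟨z₀, hz₀, hmin⟩ := isCompact_Icc.exists_isMinOn (s := Icc (a + min δ (b - a)) b)
    (nonempty_Icc.mpr (by linarith [min_le_right δ (b - a)]))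
    (hVcont.mono (Icc_subset_Icc (by linarith [lt_min hδ (sub_pos.mpr hab)]) le_rfl))
  have hm : 0 < V z₀ := hVpos z₀ ⟨by linarith [hz₀.1, lt_min hδ (sub_pos.mpr hab)], hz₀.2⟩
  refine ⟨min (c / 4) (V z₀ / (b - a) ^ 2), lt_min (by positivity)
    (div_pos hm (by nlinarith)), fun s hs => ?_⟩
  rcases le_or_gt s (min δ (b - a)) with hsδ | hsδ
  · calc min (c / 4) (V z₀ / (b - a) ^ 2) * s ^ 2 ≤ c / 4 * s ^ 2 := by
          gcongr; exact min_le_left _ _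
      _ ≤ V (a + s) := hnear s ⟨hs.1, hsδ.trans (min_le_left _ _)⟩
  · calc min (c / 4) (V z₀ / (b - a) ^ 2) * s ^ 2 ≤ V z₀ / (b - a) ^ 2 * (b - a) ^ 2 := by
          gcongr
          · exact min_le_right _ _
          · exact hs.1.le
          · exact hs.2
      _ = V z₀ := div_mul_cancel₀ _ (by nlinarith)
      _ ≤ V (a + s) := hmin ⟨by linarith, by linarith [hs.2]⟩

noncomputable def rescaledLaplaceIntegrand (V : ℝ → ℝ) (a b ε : ℝ) : ℝ → ℝ :=
  (Ioc 0 ((b - a) / ε)).indicator fun t => exp (-V (a + ε * t) / ε ^ 2)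

theorem integral_rescaledLaplaceIntegrand (hab : a ≤ b) {ε : ℝ} (hε : 0 < ε) :
    ∫ t, rescaledLaplaceIntegrand V a b ε t = (1 / ε) * ∫ z in a..b, exp (-V z / ε ^ 2) := by
  rw [rescaledLaplaceIntegrand, MeasureTheory.integral_indicator measurableSet_Ioc,
    ← integral_of_le (by positivity)]
  simp_rw [add_comm a]
  rw [integral_comp_mul_add (fun z => exp (-V z / ε ^ 2)) hε.ne', mul_zero, zero_add,
    mul_div_cancel₀ _ hε.ne', sub_add_cancel, smul_eq_mul, one_div]

theorem aestronglyMeasurable_rescaledLaplaceIntegrand (hVcont : ContinuousOn V (Icc a b))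
    {ε : ℝ} (hε : 0 < ε) : AEStronglyMeasurable (rescaledLaplaceIntegrand V a b ε) := by
  refine (aestronglyMeasurable_indicator_iff measurableSet_Ioc).mpr
    (ContinuousOn.aestronglyMeasurable ?_ measurableSet_Ioc)
  refine continuous_exp.comp_continuousOn
    ((hVcont.comp (by fun_prop) fun t ht => ?_).neg.div_const _)
  have hεt := mul_mem_Ioc_of_mem_Ioc_div hε ht
  exact ⟨by linarith [hεt.1], by linarith [hεt.2]⟩

theorem norm_rescaledLaplaceIntegrand_le {κ : ℝ}
    (hlower : ∀ s ∈ Ioc 0 (b - a), κ * s ^ 2 ≤ V (a + s)) {ε : ℝ} (hε : 0 < ε) (t : ℝ) :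
    ‖rescaledLaplaceIntegrand V a b ε t‖ ≤ exp (-κ * t ^ 2) := by
  by_cases ht : t ∈ Ioc 0 ((b - a) / ε)
  · rw [rescaledLaplaceIntegrand, indicator_of_mem ht, norm_of_nonneg (exp_pos _).le,
      exp_le_exp, neg_mul, neg_div, neg_le_neg_iff, le_div_iff₀ (by positivity)]
    linarith [hlower (ε * t) (mul_mem_Ioc_of_mem_Ioc_div hε ht)]
  · rw [rescaledLaplaceIntegrand, indicator_of_notMem ht, norm_zero]
    exact (exp_pos _).le

theorem tendsto_rescaledLaplaceIntegrand (hab : a < b)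
    (hV : (fun s => V (a + s) - c * s ^ 2 / 2) =o[𝓝[>] 0] fun s => s ^ 2) (t : ℝ) :
    Tendsto (fun ε => rescaledLaplaceIntegrand V a b ε t) (𝓝[>] 0)
      (𝓝 ((Ioi 0).indicator (fun t => exp (-(c / 2) * t ^ 2)) t)) := by
  rcases le_or_gt t 0 with ht | ht
  · simp [rescaledLaplaceIntegrand, indicator_of_notMem, ht.not_gt]
  have hlim : Tendsto (fun ε => exp (-(V (a + ε * t) / ε ^ 2))) (𝓝[>] 0)
      (𝓝 (exp (-(c * t ^ 2 / 2)))) :=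
    (continuous_exp.tendsto _).comp (tendsto_div_sq_of_isLittleO hV ht).neg
  have hsmall : ∀ᶠ ε in 𝓝[>] (0 : ℝ), ε < (b - a) / t :=
    nhdsWithin_le_nhds (gt_mem_nhds (div_pos (sub_pos.mpr hab) ht))
  rw [indicator_of_mem (mem_Ioi.mpr ht), show -(c / 2) * t ^ 2 = -(c * t ^ 2 / 2) by ring]
  refine hlim.congr' ?_
  filter_upwards [hsmall, self_mem_nhdsWithin] with ε hεt (hε : 0 < ε)
  have hmem : t ∈ Ioc 0 ((b - a) / ε) :=
    ⟨ht, (le_div_iff₀ hε).mpr (by linarith [(lt_div_iff₀ ht).mp hεt])⟩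
  simp only [rescaledLaplaceIntegrand, indicator_of_mem hmem, neg_div]

theorem tendsto_laplace_half_gaussian (hab : a < b) (hc : 0 < c)
    (hVcont : ContinuousOn V (Icc a b)) (hVpos : ∀ z ∈ Ioc a b, 0 < V z)
    (hV : (fun s => V (a + s) - c * s ^ 2 / 2) =o[𝓝[>] 0] fun s => s ^ 2) :
    Tendsto (fun ε => (1 / ε) * ∫ z in a..b, exp (-V z / ε ^ 2)) (𝓝[>] 0)
      (𝓝 √(π / (2 * c))) := by
  obtain ⟨κ, hκ, hlower⟩ := exists_pos_forall_mul_sq_le hab hc hVcont hVpos hV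
  rw [← integral_Ioi_exp_neg_half_mul_sq, ← MeasureTheory.integral_indicator measurableSet_Ioi]
  refine (tendsto_integral_filter_of_dominated_convergence (fun t => exp (-κ * t ^ 2))
    ?_ ?_ (integrable_exp_neg_mul_sq hκ)
    (ae_of_all _ (tendsto_rescaledLaplaceIntegrand hab hV))).congr' ?_
  all_goals filter_upwards [self_mem_nhdsWithin] with ε (hε : 0 < ε)
  · exact aestronglyMeasurable_rescaledLaplaceIntegrand hVcont hε
  · exact ae_of_all _ (norm_rescaledLaplaceIntegrand_le hlower hε)
  · exact integral_rescaledLaplaceIntegrand hab.le hε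

end Laplace

/-- Laplace's method at the left endpoint: if `V(x) = ∫_{x̂}^{x} v`, with `v(x̂) = 0`,
`v'(x̂) > 0` and `V > 0` on `(x̂, b]`, then
`(1/ε) ∫_{x̂}^{b} exp(-V(z)/ε²) dz → √(π/(2 v'(x̂)))` as `ε → 0⁺`. -/
theorem laplace_method_half_gaussian
    (xhat b : ℝ) (hxb : xhat < b)
    (v : ℝ → ℝ) (hv_cont : ContinuousOn v (Set.Icc xhat b))
    (hvhat : v xhat = 0)
    (vp : ℝ) (hvp : HasDerivAt v vp xhat) (hvp_pos : 0 < vp)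
    (V : ℝ → ℝ) (hV : ∀ x, V x = ∫ s in xhat..x, v s)
    (hVpos : ∀ z ∈ Set.Ioc xhat b, 0 < V z) :
    Tendsto (fun ε : ℝ => (1 / ε) * ∫ z in xhat..b, Real.exp (-V z / ε ^ 2))
      (nhdsWithin 0 (Set.Ioi 0)) (nhds (Real.sqrt (π / (2 * vp)))) := by
  have hVcont : ContinuousOn V (Icc xhat b) := by
    have := continuousOn_primitive_interval (μ := volume)
      (by rw [uIcc_of_le hxb.le]; exact hv_cont.integrableOn_Icc : IntegrableOn v (uIcc xhat b))
    rw [uIcc_of_le hxb.le] at this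
    exact this.congr fun x _ => hV x
  have hquad := isLittleO_integral_sub_half_mul_sq hxb
    (hv_cont.intervalIntegrable_of_Icc hxb.le) hvhat hvp
  refine tendsto_laplace_half_gaussian hxb hvp_pos hVcont hVpos ?_
  simpa only [hV] using hquad
end

section
/- For M₁, M₂ > 0 with M = M₁ + M₂ and 1/2 < M₁/M₂ < 2, and ε > 0, define F(M₁, M₂) = (M₂/(2π)) √((2M₂ - M₁)/M) (2M₁ - M₂) exp(-M₂ (2M₁ - M₂)³ / (4 M³ ε²)). If M₁ < M₂ (with the ratio condition holding), then there exists ε₀ > 0 such that for all ε ∈ (0, ε₀), F(M₁, M₂) - F(M₂, M₁) > 0; symmetrically, if M₁ > M₂ then F(M₁, M₂) - F(M₂, M₁) < 0 for all sufficiently small ε > 0. -/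
open Real

lemma flux_key (A B M : ℝ) (hA : 0 < A) (hB : 0 < B) (hM : M = A + B)
    (h1 : B < 2 * A) (h2 : A < 2 * B) (hAB : A < B) :
    ∃ ε₀ > 0, ∀ ε ∈ Set.Ioo (0:ℝ) ε₀,
      0 < (B / (2 * π)) * Real.sqrt ((2 * B - A) / M) * (2 * A - B) *
            Real.exp (-(B * (2 * A - B) ^ 3) / (4 * M ^ 3 * ε ^ 2)) -
          (A / (2 * π)) * Real.sqrt ((2 * A - B) / M) * (2 * B - A) *
            Real.exp (-(A * (2 * B - A) ^ 3) / (4 * M ^ 3 * ε ^ 2)) := by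
  have hMpos : 0 < M := by linarith
  have ha : 0 < 2 * A - B := by linarith
  have hb : 0 < 2 * B - A := by linarith
  have hπ : 0 < π := Real.pi_pos
  set K₁ := (B / (2 * π)) * Real.sqrt ((2 * B - A) / M) * (2 * A - B) with hK₁
  set K₂ := (A / (2 * π)) * Real.sqrt ((2 * A - B) / M) * (2 * B - A) with hK₂
  have hK₁pos : 0 < K₁ :=
    mul_pos (mul_pos (by positivity) (Real.sqrt_pos.mpr (by positivity))) ha
  have hK₂pos : 0 < K₂ :=
    mul_pos (mul_pos (by positivity) (Real.sqrt_pos.mpr (by positivity))) hb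
  set d := B - A with hd
  have hdpos : 0 < d := by simp only [hd]; linarith
  have hid : A * (2 * B - A) ^ 3 - B * (2 * A - B) ^ 3 = d * M ^ 3 := by
    subst hM; simp only [hd]; ring
  refine ⟨Real.sqrt (d * K₁ / (4 * K₂)), Real.sqrt_pos.mpr (by positivity), ?_⟩
  rintro ε ⟨hε0, hεlt⟩
  have hε2 : ε ^ 2 < d * K₁ / (4 * K₂) := by
    have h := Real.sq_sqrt (le_of_lt (show (0:ℝ) < d * K₁ / (4 * K₂) by positivity))
    nlinarith [Real.sqrt_nonneg (d * K₁ / (4 * K₂))]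
  have hε2pos : (0:ℝ) < ε ^ 2 := by positivity
  have hx : Real.exp (-(A * (2 * B - A) ^ 3) / (4 * M ^ 3 * ε ^ 2)) =
      Real.exp (-(B * (2 * A - B) ^ 3) / (4 * M ^ 3 * ε ^ 2)) *
        Real.exp (-(d / (4 * ε ^ 2))) := by
    rw [← Real.exp_add]
    congr 1
    rw [hd, hM]
    have hABne : A + B ≠ 0 := by positivity
    have hε2' : (ε:ℝ) ^ 2 ≠ 0 := by positivity
    field_simp
    ring
  rw [hx]
  set E := Real.exp (-(B * (2 * A - B) ^ 3) / (4 * M ^ 3 * ε ^ 2)) with hE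
  have hEpos : 0 < E := Real.exp_pos _
  set y := d / (4 * ε ^ 2) with hy
  have hypos : 0 < y := by positivity
  have hylt : y < Real.exp y := by
    nlinarith [Real.add_one_lt_exp (ne_of_gt hypos)]
  have hexp : Real.exp (-y) < 1 / y := by
    rw [Real.exp_neg, one_div]
    exact inv_strictAnti₀ hypos hylt
  have hlt : K₂ * Real.exp (-y) < K₁ := by
    have hε2' : ε ^ 2 * (4 * K₂) < d * K₁ := (lt_div_iff₀ (by positivity)).mp hε2
    have h2y : 4 * ε ^ 2 / d < K₁ / K₂ := by
      rw [div_lt_div_iff₀ hdpos hK₂pos]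
      nlinarith
    have hy' : Real.exp (-y) < K₁ / K₂ :=
      calc Real.exp (-y) < 1 / y := hexp
        _ = 4 * ε ^ 2 / d := by rw [hy, one_div_div]
        _ < K₁ / K₂ := h2y
    calc K₂ * Real.exp (-y) < K₂ * (K₁ / K₂) := (mul_lt_mul_iff_right₀ hK₂pos).mpr hy'
      _ = K₁ := by field_simp
  nlinarith [mul_pos hEpos (sub_pos.mpr hlt)]

/-- Sign of the metastable mass-exchange flux for the cubic kernel: for admissible masses,
if `M₁ < M₂` then `F(M₁, M₂) - F(M₂, M₁) > 0` for all sufficiently small `ε > 0` (the heavier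
spike leaks mass to the lighter one), and symmetrically if `M₁ > M₂`. -/
theorem flux_sign
    (M₁ M₂ : ℝ) (hM₁ : 0 < M₁) (hM₂ : 0 < M₂)
    (hratio₁ : 1 / 2 < M₁ / M₂) (hratio₂ : M₁ / M₂ < 2)
    (M : ℝ) (hM : M = M₁ + M₂)
    (F : ℝ → ℝ → ℝ → ℝ)
    (hF : ∀ A B ε : ℝ, F A B ε =
      (B / (2 * π)) * Real.sqrt ((2 * B - A) / M) * (2 * A - B) *
        Real.exp (-(B * (2 * A - B) ^ 3) / (4 * M ^ 3 * ε ^ 2))) :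
    (M₁ < M₂ → ∃ ε₀ > 0, ∀ ε ∈ Set.Ioo 0 ε₀, 0 < F M₁ M₂ ε - F M₂ M₁ ε) ∧
    (M₂ < M₁ → ∃ ε₀ > 0, ∀ ε ∈ Set.Ioo 0 ε₀, F M₁ M₂ ε - F M₂ M₁ ε < 0) := by
  have h1 : M₂ < 2 * M₁ := by
    have := (div_lt_div_iff₀ (by norm_num) hM₂).mp hratio₁
    linarith
  have h2 : M₁ < 2 * M₂ := by
    have := (div_lt_iff₀ hM₂).mp hratio₂
    linarith
  constructor
  · intro hlt
    obtain ⟨ε₀, hε₀, h⟩ := flux_key M₁ M₂ M hM₁ hM₂ hM h1 h2 hlt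
    refine ⟨ε₀, hε₀, fun ε hε => ?_⟩
    rw [hF, hF]
    exact h ε hε
  · intro hlt
    obtain ⟨ε₀, hε₀, h⟩ := flux_key M₂ M₁ M hM₂ hM₁ (by linarith) (by linarith) (by linarith) hlt
    refine ⟨ε₀, hε₀, fun ε hε => ?_⟩
    rw [hF, hF]
    have := h ε hε
    linarith
end
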